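/- arXiv:2206.03138 — 3 statements merged into one kernel-verified Lean document; each statement's English description precedes it below -/
import Mathlib

section
/- Let β > 0 and d be a positive natural number. Then for all vectors x, y in ℝ^d, the inner product ⟨|x|^β x − |y|^β y, x − y⟩ is at least (1/2)(|x|^β + |y|^β)|x − y|², where |·| denotes the Euclidean norm on ℝ^d and ⟨·,·⟩ the Euclidean inner product. -/
open scoped RealInnerProductSpace

theorem monotone_rpow_damping (β : ℝ) (hβ : 0 < β) (d : ℕ) (hd : 0 < d)
    (x y : EuclideanSpace ℝ (Fin d)) :
    ⟪(‖x‖ ^ β) • x - (‖y‖ ^ β) • y, x - y⟫ ≥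
      (1 / 2) * (‖x‖ ^ β + ‖y‖ ^ β) * ‖x - y‖ ^ 2 := by
  have h3 : ‖x - y‖ ^ 2 = ‖x‖ ^ 2 - 2 * ⟪x, y⟫ + ‖y‖ ^ 2 := norm_sub_sq_real x y
  have hmono : (‖x‖ ^ β - ‖y‖ ^ β) * (‖x‖ ^ 2 - ‖y‖ ^ 2) ≥ 0 := by
    rcases le_total ‖x‖ ‖y‖ with h | h
    · have h1 : ‖x‖ ^ β ≤ ‖y‖ ^ β := Real.rpow_le_rpow (norm_nonneg x) h hβ.le
      have h2 : ‖x‖ ^ 2 ≤ ‖y‖ ^ 2 := by nlinarith [norm_nonneg x, norm_nonneg y]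
      nlinarith
    · have h1 : ‖y‖ ^ β ≤ ‖x‖ ^ β := Real.rpow_le_rpow (norm_nonneg y) h hβ.le
      have h2 : ‖y‖ ^ 2 ≤ ‖x‖ ^ 2 := by nlinarith [norm_nonneg x, norm_nonneg y]
      nlinarith
  have hexp : ⟪(‖x‖ ^ β) • x - (‖y‖ ^ β) • y, x - y⟫ =
      ‖x‖ ^ β * ‖x‖ ^ 2 + ‖y‖ ^ β * ‖y‖ ^ 2 - (‖x‖ ^ β + ‖y‖ ^ β) * ⟪x, y⟫ := by
    rw [inner_sub_left, inner_sub_right, inner_sub_right, real_inner_smul_left,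
      real_inner_smul_left, real_inner_smul_left, real_inner_smul_left,
      real_inner_self_eq_norm_sq, real_inner_self_eq_norm_sq,
      real_inner_comm y x]
    ring
  rw [hexp, h3]
  nlinarith [hmono]
end

section
/- Let b > 0 and d be a positive natural number. Then for all vectors x, y in ℝ^d, the inner product ⟨(e^{b|x|²} − 1)x − (e^{b|y|²} − 1)y, x − y⟩ is at least (1/2)((e^{b|x|²} − 1) + (e^{b|y|²} − 1))|x − y|², where |·| denotes the Euclidean norm on ℝ^d and ⟨·,·⟩ the Euclidean inner product. -/
open scoped RealInnerProductSpace

theorem monotone_exp_damping (b : ℝ) (hb : 0 < b) (d : ℕ) (hd : 0 < d)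
    (x y : EuclideanSpace ℝ (Fin d)) :
    ⟪(Real.exp (b * ‖x‖ ^ 2) - 1) • x - (Real.exp (b * ‖y‖ ^ 2) - 1) • y, x - y⟫ ≥
      (1 / 2) * ((Real.exp (b * ‖x‖ ^ 2) - 1) + (Real.exp (b * ‖y‖ ^ 2) - 1)) * ‖x - y‖ ^ 2 := by
  set A := Real.exp (b * ‖x‖ ^ 2) - 1 with hA
  set C := Real.exp (b * ‖y‖ ^ 2) - 1 with hC
  have hkey : ⟪(A • x - C • y : EuclideanSpace ℝ (Fin d)), x - y⟫
      = A * ⟪x, x⟫ - A * ⟪x, y⟫ - C * ⟪x, y⟫ + C * ⟪y, y⟫ := by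
    rw [inner_sub_left, inner_sub_right, inner_sub_right, real_inner_smul_left,
      real_inner_smul_left, real_inner_smul_left, real_inner_smul_left,
      real_inner_comm y x]
    ring
  have hn : ‖x - y‖ ^ 2 = ⟪x, x⟫ - 2 * ⟪x, y⟫ + ⟪y, y⟫ := by
    rw [@norm_sub_sq_real, real_inner_self_eq_norm_sq, real_inner_self_eq_norm_sq]
  have hxx : ⟪x, x⟫ = ‖x‖ ^ 2 := real_inner_self_eq_norm_sq x
  have hyy : ⟪y, y⟫ = ‖y‖ ^ 2 := real_inner_self_eq_norm_sq y
  have hmono : (A - C) * (‖x‖ ^ 2 - ‖y‖ ^ 2) ≥ 0 := by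
    rcases le_total (‖x‖ ^ 2) (‖y‖ ^ 2) with h | h
    · have : A ≤ C := by
        rw [hA, hC]
        have := Real.exp_le_exp.mpr (mul_le_mul_of_nonneg_left h hb.le)
        linarith
      nlinarith [mul_nonneg (by linarith : (0:ℝ) ≤ C - A)
        (by linarith : (0:ℝ) ≤ ‖y‖ ^ 2 - ‖x‖ ^ 2)]
    · have : C ≤ A := by
        rw [hA, hC]
        have := Real.exp_le_exp.mpr (mul_le_mul_of_nonneg_left h hb.le)
        linarith
      have := mul_nonneg (by linarith : (0:ℝ) ≤ A - C)
        (by linarith : (0:ℝ) ≤ ‖x‖ ^ 2 - ‖y‖ ^ 2)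
      linarith
  rw [hkey, hn, hxx, hyy]
  nlinarith [hmono]
end

section
/- Let a > 0 and b > 0 be real numbers with ab < 1, and set μ = (1/b)·log(1/(ab)). Then a(e^{bμ} − 1) < μ. Consequently, the number λ₀ ≥ 0 characterized by {λ ≥ 0 : a(e^{bλ} − 1) ≤ λ} = [0, λ₀] satisfies λ₀ > (1/b)·log(1/(ab)). -/
/-!
At `μ = log (1 / (a b)) / b` one has `e^{bμ} = 1 / (a b)`, so `a (e^{bμ} - 1) < μ` is
`1 - a b < -log (a b)`, the strict form of `log x < x - 1` for `x ≠ 1`. Being a strict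
inequality between continuous functions, it persists slightly to the right of `μ`, so the
sublevel set `[0, λ₀]` reaches beyond `μ`.
-/

open Real Filter Topology

theorem mul_exp_sub_one_lt_of_mul_ne_one {a b : ℝ} (ha : 0 < a) (hb : 0 < b)
    (hab : a * b ≠ 1) :
    a * (exp (b * ((1 / b) * log (1 / (a * b)))) - 1) < (1 / b) * log (1 / (a * b)) := by
  have hexp : exp (b * ((1 / b) * log (1 / (a * b)))) = 1 / (a * b) := by
    rw [← mul_assoc, mul_one_div_cancel hb.ne', one_mul, exp_log (by positivity)]
  have hlog : log (a * b) < a * b - 1 := log_lt_sub_one_of_pos (by positivity) hab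
  have hgap : (1 / b) * log (1 / (a * b)) - a * (1 / (a * b) - 1) =
      (a * b - 1 - log (a * b)) / b := by
    rw [one_div (a * b), log_inv]
    field_simp
    ring
  rw [hexp, ← sub_pos, hgap]
  exact div_pos (by linarith) hb

theorem lt_of_setOf_le_subset_Iic {f : ℝ → ℝ} {x c : ℝ} (hf : ContinuousAt f x) (hx₀ : 0 ≤ x)
    (hx : f x < x) (hS : {l : ℝ | 0 ≤ l ∧ f l ≤ l} ⊆ Set.Iic c) : x < c := by
  have hnear : ∀ᶠ y in 𝓝 x, f y < y := hf.eventually_lt continuousAt_id hx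
  obtain ⟨y, hfy, hxy⟩ :=
    ((hnear.filter_mono nhdsWithin_le_nhds).and (self_mem_nhdsWithin (s := Set.Ioi x))).exists
  exact hxy.trans_le (hS ⟨hx₀.trans (le_of_lt hxy), hfy.le⟩)

theorem lambda0_lower_bound_of_ab_lt_one (a b : ℝ) (ha : 0 < a) (hb : 0 < b)
    (hab : a * b < 1) :
    a * (Real.exp (b * ((1 / b) * Real.log (1 / (a * b)))) - 1) <
      (1 / b) * Real.log (1 / (a * b)) ∧
    ∀ lam0 : ℝ, 0 ≤ lam0 →
      {l : ℝ | 0 ≤ l ∧ a * (Real.exp (b * l) - 1) ≤ l} = Set.Icc 0 lam0 →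
      lam0 > (1 / b) * Real.log (1 / (a * b)) := by
  have hkey := mul_exp_sub_one_lt_of_mul_ne_one ha hb hab.ne
  refine ⟨hkey, fun lam0 _ hset => ?_⟩
  have hμ₀ : 0 ≤ (1 / b) * log (1 / (a * b)) :=
    mul_nonneg (by positivity) (log_nonneg (by rw [le_div_iff₀ (by positivity)]; linarith))
  exact lt_of_setOf_le_subset_Iic (by fun_prop) hμ₀ hkey
    (hset.subset.trans Set.Icc_subset_Iic_self)
end
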